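/- arXiv:1903.07841 — 4 statements merged into one kernel-verified Lean document; each statement's English description precedes it below -/
import Mathlib

section
/- For every composite integer n ≥ 4, the graph Υ_n is connected. -/
open scoped BigOperators

/-- The proper divisors of `n`: the divisors `d` of `n` with `1 < d < n`. -/
def properDivs (n : ℕ) : Finset ℕ :=
  (Nat.divisors n).filter fun d => 1 < d ∧ d < n

/-- The graph `Υ_n` on the proper divisors of `n`, where distinct `d_i`, `d_j` are
adjacent iff `n ∣ d_i * d_j`. -/
def upsilon (n : ℕ) : SimpleGraph {d // d ∈ properDivs n} where
  Adj a b := a ≠ b ∧ n ∣ a.val * b.val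
  symm := by
    constructor
    rintro a b ⟨hne, h⟩
    exact ⟨hne.symm, by rwa [mul_comm]⟩
  loopless := ⟨fun a h => h.1 rfl⟩

instance (n : ℕ) : DecidableRel (upsilon n).Adj :=
  fun a b => inferInstanceAs (Decidable (a ≠ b ∧ n ∣ a.val * b.val))

/-!
Let `p` be the least prime factor of `n` and `c = n / p`, a proper divisor since `n` is
composite. Every proper divisor `d` divisible by `p` is adjacent to `c`, as `n ∣ d * c`.
A proper divisor `d` not divisible by `p` is adjacent to its complementary divisor `n / d`,
which is divisible by `p` because `p ∣ d * (n / d) = n`. So every vertex is joined to `c`.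
-/

theorem mem_properDivs {n d : ℕ} : d ∈ properDivs n ↔ d ∣ n ∧ 1 < d ∧ d < n := by
  simp only [properDivs, Finset.mem_filter, Nat.mem_divisors]
  constructor
  · rintro ⟨⟨hd, -⟩, hlt⟩
    exact ⟨hd, hlt⟩
  · rintro ⟨hd, h1, hlt⟩
    exact ⟨⟨hd, by omega⟩, h1, hlt⟩

theorem div_mem_properDivs {n d : ℕ} (hd : d ∈ properDivs n) : n / d ∈ properDivs n := by
  obtain ⟨hdn, hd1, hlt⟩ := mem_properDivs.mp hd
  refine mem_properDivs.mpr ⟨Nat.div_dvd_of_dvd hdn, ?_, Nat.div_lt_self (by omega) hd1⟩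
  exact (Nat.lt_div_iff_mul_lt' hdn 1).mpr (by omega)

namespace upsilon

variable {n : ℕ}

def complDivisor (v : {d // d ∈ properDivs n}) : {d // d ∈ properDivs n} :=
  ⟨n / v.val, div_mem_properDivs v.2⟩

theorem val_mul_complDivisor (v : {d // d ∈ properDivs n}) : v.val * (complDivisor v).val = n :=
  Nat.mul_div_cancel' (mem_properDivs.mp v.2).1

theorem adj_complDivisor {v : {d // d ∈ properDivs n}} (hv : v ≠ complDivisor v) :
    (upsilon n).Adj v (complDivisor v) :=
  ⟨hv, (val_mul_complDivisor v).symm.dvd⟩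

theorem reachable_of_dvd {p : ℕ} {c v : {d // d ∈ properDivs n}} (hc : c.val * p = n)
    (hv : p ∣ v.val) : (upsilon n).Reachable v c := by
  by_cases hvc : v = c
  · rw [hvc]
  obtain ⟨k, hk⟩ := hv
  refine SimpleGraph.Adj.reachable ⟨hvc, ⟨k, ?_⟩⟩
  calc v.val * c.val = k * (c.val * p) := by rw [hk]; ring
    _ = n * k := by rw [hc, mul_comm]

end upsilon

/-- For every composite `n ≥ 4`, the graph `Υ_n` is connected. -/
theorem upsilon_connected (n : ℕ) (hn : 4 ≤ n) (hcomp : ¬ n.Prime) :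
    (upsilon n).Connected := by
  set p := n.minFac
  have hp : p.Prime := Nat.minFac_prime (by omega)
  have hpn : p ∈ properDivs n :=
    mem_properDivs.mpr ⟨Nat.minFac_dvd n, hp.one_lt,
      (Nat.not_prime_iff_minFac_lt (by omega)).mp hcomp⟩
  set c := upsilon.complDivisor ⟨p, hpn⟩
  have hc : c.val * p = n := Nat.div_mul_cancel (Nat.minFac_dvd n)
  have reach_c (v) : (upsilon n).Reachable v c := by
    by_cases hpv : p ∣ v.val
    · exact upsilon.reachable_of_dvd hc hpv
    have hp_compl : p ∣ (upsilon.complDivisor v).val := by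
      refine (hp.dvd_mul.mp ?_).resolve_left hpv
      rw [upsilon.val_mul_complDivisor]
      exact Nat.minFac_dvd n
    have hv_ne : v ≠ upsilon.complDivisor v := fun h => hpv (h ▸ hp_compl)
    exact (upsilon.adj_complDivisor hv_ne).reachable.trans (upsilon.reachable_of_dvd hc hp_compl)
  exact (SimpleGraph.connected_iff _).mpr
    ⟨fun u v => (reach_c u).trans (reach_c v).symm, ⟨c⟩⟩
end

section
/- Let n ≥ 4 be a composite integer with proper divisors d_1, d_2, …, d_k, and let Γ(A_{d_i}) be the induced subgraph of Γ(Z_n) on the vertex set A_{d_i} for 1 ≤ i ≤ k. Then the zero divisor graph Γ(Z_n) is equal to the Υ_n-generalized join graph Υ_n[Γ(A_{d_1}), Γ(A_{d_2}), …, Γ(A_{d_k})]. -/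
open scoped BigOperators

/-- Vertex set of the zero divisor graph of `ZMod n`: the nonzero zero divisors. -/
abbrev ZdVert (n : ℕ) : Type :=
  {x : ZMod n // x ≠ 0 ∧ ∃ y : ZMod n, y ≠ 0 ∧ x * y = 0}

/-- The zero divisor graph `Γ(ZMod n)`: vertices are the nonzero zero divisors, and two
distinct vertices are adjacent iff their product is zero. -/
def zdGraph (n : ℕ) : SimpleGraph (ZdVert n) where
  Adj a b := a ≠ b ∧ (a : ZMod n) * (b : ZMod n) = 0
  symm := by
    constructor
    rintro a b ⟨hne, h⟩
    exact ⟨hne.symm, by rwa [mul_comm]⟩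
  loopless := ⟨fun a h => h.1 rfl⟩

instance (n : ℕ) : DecidableRel (zdGraph n).Adj :=
  fun a b => inferInstanceAs (Decidable (a ≠ b ∧ (a : ZMod n) * (b : ZMod n) = 0))

instance (n : ℕ) (s : Set (ZdVert n)) [DecidablePred (· ∈ s)] :
    DecidableRel ((zdGraph n).induce s).Adj :=
  fun a b => inferInstanceAs (Decidable ((zdGraph n).Adj a b))

/-- The set `A_d = {x ∈ ZMod n : gcd(x, n) = d}`, viewed inside the vertex set of the
zero divisor graph. -/
def fiberSet (n : ℕ) (d : ℕ) : Set (ZdVert n) :=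
  {v | Nat.gcd (v : ZMod n).val n = d}

instance (n d : ℕ) : DecidablePred (· ∈ fiberSet n d) :=
  fun v => inferInstanceAs (Decidable (Nat.gcd (v : ZMod n).val n = d))

/-- The `G`-generalized join of the family of graphs `H i`: each vertex `i` of `G` is
replaced by the graph `H i`, and every vertex of `H i` is joined to every vertex of
`H j` whenever `i` and `j` are adjacent in `G`. -/
def generalizedJoin {ι : Type*} {V : ι → Type*} (G : SimpleGraph ι)
    (H : ∀ i, SimpleGraph (V i)) : SimpleGraph (Σ i, V i) where
  Adj a b := G.Adj a.1 b.1 ∨ ∃ h : a.1 = b.1, (H b.1).Adj (h ▸ a.2) b.2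
  symm := by
    constructor
    intro a b hab
    obtain ⟨i, x⟩ := a
    obtain ⟨j, y⟩ := b
    dsimp only at hab ⊢
    rcases hab with h | ⟨h, hadj⟩
    · exact Or.inl h.symm
    · subst h
      exact Or.inr ⟨rfl, hadj.symm⟩
  loopless := by
    constructor
    intro a ha
    obtain ⟨i, x⟩ := a
    dsimp only at ha
    rcases ha with h | ⟨h, hadj⟩
    · exact G.irrefl h
    · exact (H i).irrefl hadj

/- Every vertex `x` lies in exactly one `A_d`, namely for `d = gcd(x, n)`, which is a proper
divisor because `x` is neither zero nor a unit. Since `n ∣ xy ↔ n ∣ gcd(x, n) · gcd(y, n)`,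
vertices in different classes `A_d ≠ A_e` are adjacent exactly when `d` and `e` are adjacent in
`Υ_n`, which is the adjacency of the generalized join; inside one class both graphs agree. -/

lemma Subtype.val_eqRec {ι V : Type*} {s : ι → Set V} {i j : ι} (h : i = j) (z : s i) :
    ((h ▸ z : s j) : V) = z := by
  subst h
  rfl

def isoGeneralizedJoinOfFibers {V ι : Type*} (G : SimpleGraph V) (G' : SimpleGraph ι)
    (f : V → ι) (s : ι → Set V) (hs : ∀ v i, v ∈ s i ↔ f v = i)
    (hadj : ∀ a b, f a ≠ f b → (G.Adj a b ↔ G'.Adj (f a) (f b))) :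
    G ≃g generalizedJoin G' (fun i => G.induce (s i)) where
  toFun v := ⟨f v, v, (hs v (f v)).2 rfl⟩
  invFun x := x.2
  left_inv _ := rfl
  right_inv := by
    rintro ⟨i, v, hv⟩
    obtain rfl := (hs v i).1 hv
    rfl
  map_rel_iff' {a b} := by
    simp only [generalizedJoin, Equiv.coe_fn_mk, SimpleGraph.comap_adj,
      Function.Embedding.coe_subtype, Subtype.val_eqRec]
    by_cases hab : f a = f b
    · simp [hab]
    · simp [hab, hadj a b hab]

namespace ZdVert

variable {n : ℕ}

-- `ZMod 0 = ℤ` has no zero divisors.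
lemma ne_zero (v : ZdVert n) : n ≠ 0 := by
  rintro rfl
  obtain ⟨x, hx, y, hy, hxy⟩ := v
  exact mul_ne_zero (M₀ := ℤ) hx hy hxy

lemma not_isUnit (v : ZdVert n) : ¬ IsUnit (v : ZMod n) := by
  obtain ⟨x, -, y, hy, hxy⟩ := v
  exact fun hu => hy (hu.mul_right_eq_zero.1 hxy)

lemma gcd_val_mem_properDivs (v : ZdVert n) : Nat.gcd (v : ZMod n).val n ∈ properDivs n := by
  have : NeZero n := ⟨v.ne_zero⟩
  have hval : (v : ZMod n).val ≠ 0 := (ZMod.val_ne_zero _).2 v.2.1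
  simp only [properDivs, Finset.mem_filter, Nat.mem_divisors]
  refine ⟨⟨Nat.gcd_dvd_right _ _, v.ne_zero⟩, ?_, ?_⟩
  · have hne : Nat.gcd (v : ZMod n).val n ≠ 1 := fun h => v.not_isUnit <| by
      rw [← ZMod.natCast_zmod_val (v : ZMod n)]
      exact (ZMod.isUnit_iff_coprime _ _).2 h
    have hpos := Nat.gcd_pos_of_pos_right (v : ZMod n).val (Nat.pos_of_ne_zero v.ne_zero)
    omega
  · exact (Nat.gcd_le_left _ (Nat.pos_of_ne_zero hval)).trans_lt (ZMod.val_lt _)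

def divisorClass (v : ZdVert n) : {d // d ∈ properDivs n} :=
  ⟨_, v.gcd_val_mem_properDivs⟩

end ZdVert

lemma ZMod.mul_eq_zero_iff_dvd_gcd_mul_gcd {n : ℕ} [NeZero n] (x y : ZMod n) :
    x * y = 0 ↔ n ∣ Nat.gcd x.val n * Nat.gcd y.val n := by
  rw [Nat.gcd_comm x.val, Nat.gcd_comm y.val, Nat.dvd_gcd_mul_gcd_iff_dvd_mul,
    ← ZMod.natCast_eq_zero_iff, Nat.cast_mul, ZMod.natCast_zmod_val, ZMod.natCast_zmod_val]

lemma zdGraph_adj_iff_upsilon_adj {n : ℕ} (a b : ZdVert n)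
    (hab : a.divisorClass ≠ b.divisorClass) :
    (zdGraph n).Adj a b ↔ (upsilon n).Adj a.divisorClass b.divisorClass := by
  have : NeZero n := ⟨a.ne_zero⟩
  have hne : a ≠ b := fun h => hab (congrArg ZdVert.divisorClass h)
  simp only [zdGraph, upsilon, ne_eq, hne, hab, not_false_eq_true, true_and]
  exact ZMod.mul_eq_zero_iff_dvd_gcd_mul_gcd _ _

theorem zdGraph_eq_generalizedJoin_general (n : ℕ) :
    ∃ e : zdGraph n ≃g generalizedJoin (upsilon n)
        (fun d => (zdGraph n).induce (fiberSet n d.val)),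
      ∀ v : ZdVert n, ((e v).2 : ZdVert n) = v :=
  ⟨isoGeneralizedJoinOfFibers (zdGraph n) (upsilon n) ZdVert.divisorClass
      (fun d => fiberSet n d.val) (fun _ _ => ⟨fun h => Subtype.ext h, congrArg Subtype.val⟩)
      zdGraph_adj_iff_upsilon_adj,
    fun _ => rfl⟩

/-- For composite `n ≥ 4` with proper divisors `d_1, …, d_k`, the zero divisor graph
`Γ(ZMod n)` is (canonically isomorphic to, fixing each vertex) the `Υ_n`-generalized
join `Υ_n[Γ(A_{d_1}), …, Γ(A_{d_k})]` of the induced subgraphs on the sets `A_d`. -/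
theorem zdGraph_eq_generalizedJoin (n : ℕ) (hn : 4 ≤ n) (hcomp : ¬ n.Prime) :
    ∃ e : zdGraph n ≃g generalizedJoin (upsilon n)
        (fun d => (zdGraph n).induce (fiberSet n d.val)),
      ∀ v : ZdVert n, ((e v).2 : ZdVert n) = v :=
  zdGraph_eq_generalizedJoin_general n
end

section
/- If p is a prime and t ≥ 2 is an integer, then the zero divisor graph Γ(Z_{p^t}) is Laplacian integral, i.e., every eigenvalue of its Laplacian matrix is an integer. -/
open scoped BigOperators

/-!
In `ZMod (p ^ t)` two nonzero elements multiply to zero iff their `p`-adic valuations add up to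
at least `t`, so `Γ(ZMod (p ^ t))` is a threshold graph: every nonempty vertex set contains a
vertex that is isolated or dominating in it. Threshold graphs are Laplacian integral (Merris):
by induction on vertex sets `s`, for `G` and `Gᶜ` restricted to `s` simultaneously, the
Laplacian is killed by a product of factors `X - r` with `r ∈ ℤ`. Deleting an isolated vertex
does not change the Laplacian, and if `q` kills the Laplacian `L` of `G` on `s`, then
`X * q (#s - X)` kills `#s • P - J - L`, the Laplacian of `Gᶜ` on `s` (`P` the projection onto
`s`, `J` the all-ones block on `s`); a dominating vertex of `G` is an isolated one of `Gᶜ`.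
-/

open Finset Matrix Polynomial

section Annihilator

variable {R 𝒜 : Type*} [CommRing R] [Ring 𝒜] [Algebra R 𝒜]

theorem SemiconjBy.aeval {b x y : 𝒜} (h : SemiconjBy b x y) (q : R[X]) :
    SemiconjBy b (aeval x q) (aeval y q) := by
  induction q using Polynomial.induction_on' with
  | add q r hq hr => simpa only [map_add] using hq.add_right hr
  | monomial n c =>
    simp only [aeval_monomial]
    exact SemiconjBy.mul_right (Algebra.commute_algebraMap_right c b) (h.pow_right n)

/-- Used with `K` the Laplacian of a complete graph on `N` vertices and `A` that of a spanning
subgraph, so that `K - A` is the Laplacian of its complement; the point is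
`(K - A) * (N - (K - A)) = A * (K - A)`. -/
theorem aeval_sub_eq_zero_of_mul_eq_smul {A K : 𝒜} {N : R} (hAK : A * K = N • A)
    (hKA : K * A = N • A) (hKK : K * K = N • K) {q : R[X]} (hq : aeval A q = 0) :
    aeval (K - A) (X * q.comp (C N - X)) = 0 := by
  have hsemi : SemiconjBy (K - A) (algebraMap R 𝒜 N - (K - A)) A := by
    simp only [SemiconjBy, mul_sub, sub_mul, ← Algebra.commutes, ← Algebra.smul_def,
      hAK, hKA, hKK]
    abel
  rw [map_mul, aeval_comp, aeval_X, map_sub, aeval_C, aeval_X, (hsemi.aeval q).eq, hq, zero_mul]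

end Annihilator

section IntegerRoots

variable {𝒜 : Type*} [Ring 𝒜]

def AnnihilatedByIntegerRoots (a : 𝒜) : Prop :=
  ∃ s : Multiset ℤ, aeval a (s.map fun r => X - C r).prod = 0

theorem annihilatedByIntegerRoots_zero : AnnihilatedByIntegerRoots (0 : 𝒜) :=
  ⟨{0}, by simp⟩

theorem prod_X_sub_C_comp_C_sub_X (s : Multiset ℤ) (N : ℤ) :
    (s.map fun r => X - C r).prod.comp (C N - X) =
      (-1) ^ Multiset.card s * (s.map fun r => X - C (N - r)).prod := by
  induction s using Multiset.induction_on with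
  | empty => simp
  | cons r s ih =>
    simp only [Multiset.map_cons, Multiset.prod_cons, mul_comp, ih, Multiset.card_cons,
      sub_comp, X_comp, C_comp, pow_succ, C_sub]
    ring

theorem AnnihilatedByIntegerRoots.sub {A K : 𝒜} {N : ℕ} (hAK : A * K = N • A)
    (hKA : K * A = N • A) (hKK : K * K = N • K) (hA : AnnihilatedByIntegerRoots A) :
    AnnihilatedByIntegerRoots (K - A) := by
  obtain ⟨s, hs⟩ := hA
  refine ⟨0 ::ₘ s.map ((N : ℤ) - ·), ?_⟩
  have h := aeval_sub_eq_zero_of_mul_eq_smul (N := (N : ℤ)) (by simpa only [natCast_zsmul])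
    (by simpa only [natCast_zsmul]) (by simpa only [natCast_zsmul]) hs
  rw [prod_X_sub_C_comp_C_sub_X, mul_left_comm, map_mul, map_pow, map_neg, map_one] at h
  simpa [Multiset.map_map, Function.comp_def] using
    (isUnit_one.neg.pow _).mul_right_eq_zero.mp h

theorem AnnihilatedByIntegerRoots.exists_eq_intCast {𝕜 : Type*} [Field 𝕜] [Algebra 𝕜 𝒜]
    {a : 𝒜} (ha : AnnihilatedByIntegerRoots a) {z : 𝕜} (hz : z ∈ spectrum 𝕜 a) :
    ∃ r : ℤ, z = r := by
  obtain ⟨s, hs⟩ := ha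
  set q := (s.map fun r => X - C r).prod.map (algebraMap ℤ 𝕜)
  have hq : eval z q ∈ spectrum 𝕜 (0 : 𝒜) := by
    simpa only [q, aeval_map_algebraMap, hs] using
      spectrum.subset_polynomial_aeval a q ⟨z, hz, rfl⟩
  have hq0 : eval z q = 0 := by
    by_contra hne
    exact spectrum.mem_iff.mp hq (by simpa using (IsUnit.mk0 _ hne).map (algebraMap 𝕜 𝒜))
  simp only [q, Polynomial.map_multiset_prod, eval_multiset_prod, Multiset.prod_eq_zero_iff,
    Multiset.map_map, Function.comp_def, Polynomial.map_sub, map_X, map_C, eval_sub, eval_X,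
    eval_C, Multiset.mem_map, sub_eq_zero] at hq0
  obtain ⟨r, -, hr⟩ := hq0
  exact ⟨r, by rw [hr, eq_intCast]⟩

end IntegerRoots

namespace SimpleGraph

variable {V : Type*}

/-- Unlike `SimpleGraph.induce`, this keeps the vertex type: vertices outside `s` become
isolated, so Laplacians of restrictions to different sets live in the same matrix ring. -/
def restrict (G : SimpleGraph V) (s : Finset V) : SimpleGraph V where
  Adj x y := G.Adj x y ∧ x ∈ s ∧ y ∈ s
  symm := ⟨fun _ _ h => ⟨h.1.symm, h.2.2, h.2.1⟩⟩
  loopless := ⟨fun _ h => h.1.ne rfl⟩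

@[simp]
theorem restrict_adj {G : SimpleGraph V} {s : Finset V} {x y : V} :
    (G.restrict s).Adj x y ↔ G.Adj x y ∧ x ∈ s ∧ y ∈ s :=
  Iff.rfl

instance [DecidableEq V] (G : SimpleGraph V) [DecidableRel G.Adj] (s : Finset V) :
    DecidableRel (G.restrict s).Adj :=
  fun x y => inferInstanceAs (Decidable (G.Adj x y ∧ x ∈ s ∧ y ∈ s))

theorem restrict_univ [Fintype V] (G : SimpleGraph V) : G.restrict univ = G := by
  ext; simp

theorem restrict_erase_of_forall_not_adj [DecidableEq V] {G : SimpleGraph V} {s : Finset V}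
    {u : V} (hu : ∀ v ∈ s, ¬G.Adj u v) : G.restrict (s.erase u) = G.restrict s := by
  ext x y
  simp only [restrict_adj, mem_erase]
  refine ⟨by tauto, fun ⟨hxy, hx, hy⟩ => ⟨hxy, ⟨?_, hx⟩, ?_, hy⟩⟩
  · rintro rfl; exact hu y hy hxy
  · rintro rfl; exact hu x hx hxy.symm

def IsThreshold (G : SimpleGraph V) : Prop :=
  ∀ s : Finset V, s.Nonempty → ∃ u ∈ s, (∀ v ∈ s, ¬G.Adj u v) ∨ ∀ v ∈ s, v ≠ u → G.Adj u v

theorem IsThreshold.compl {G : SimpleGraph V} (hG : G.IsThreshold) : Gᶜ.IsThreshold := by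
  intro s hs
  obtain ⟨u, hu, hiso | hdom⟩ := hG s hs
  · exact ⟨u, hu, Or.inr fun v hv hvu => ⟨hvu.symm, hiso v hv⟩⟩
  · exact ⟨u, hu, Or.inl fun v hv ⟨huv, hadj⟩ => hadj (hdom v hv huv.symm)⟩

theorem isThreshold_of_adj_iff {α : Type*} [AddCommMonoid α] [LinearOrder α]
    [IsOrderedAddMonoid α] {G : SimpleGraph V} (w : V → α) (θ : α)
    (hG : ∀ x y, G.Adj x y ↔ x ≠ y ∧ θ ≤ w x + w y) : G.IsThreshold := by
  intro s hs
  obtain ⟨u, hu, hmax⟩ := s.exists_max_image w hs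
  obtain ⟨l, hl, hmin⟩ := s.exists_min_image w hs
  by_cases h : θ ≤ w u + w l
  · exact ⟨u, hu, Or.inr fun v hv hvu =>
      (hG u v).mpr ⟨hvu.symm, h.trans (add_le_add_right (hmin v hv) _)⟩⟩
  · refine ⟨l, hl, Or.inl fun v hv hadj => h ?_⟩
    calc θ ≤ w l + w v := ((hG l v).mp hadj).2
      _ ≤ w l + w u := add_le_add_right (hmax v hv) _
      _ = w u + w l := add_comm _ _

variable [Fintype V] [DecidableEq V] {R : Type*} [CommRing R]

theorem lapMatrix_eq_of_eq {G H : SimpleGraph V} [DecidableRel G.Adj] [DecidableRel H.Adj]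
    (h : G = H) : G.lapMatrix R = H.lapMatrix R := by
  subst h; congr

theorem lapMatrix_map {S : Type*} [CommRing S] (G : SimpleGraph V) [DecidableRel G.Adj]
    (f : R →+* S) : (G.lapMatrix R).map f = G.lapMatrix S := by
  ext x y
  by_cases h : x = y <;> simp [lapMatrix, degMatrix, adjMatrix_apply, h, apply_ite f]

theorem lapMatrix_apply_eq_zero_of_notMem {H : SimpleGraph V} [DecidableRel H.Adj]
    {s : Finset V} (hH : ∀ ⦃x y⦄, H.Adj x y → y ∈ s) (x : V) {y : V} (hy : y ∉ s) :
    H.lapMatrix R x y = 0 := by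
  have hdeg : H.degree y = 0 := Finset.card_eq_zero.mpr <|
    Finset.eq_empty_of_forall_notMem fun z hz => hy (hH ((H.mem_neighborFinset y z).mp hz).symm)
  by_cases hxy : x = y
  · subst hxy; simp [lapMatrix, degMatrix, hdeg]
  · have hadj : ¬H.Adj x y := fun h => hy (hH h)
    simp [lapMatrix, degMatrix, hxy, hadj]

theorem lapMatrix_restrict_empty (G : SimpleGraph V) [DecidableRel G.Adj] :
    (G.restrict ∅).lapMatrix R = 0 := by
  ext x y
  exact lapMatrix_apply_eq_zero_of_notMem (H := G.restrict ∅) (fun _ _ h => h.2.2) x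
    (notMem_empty y)

theorem lapMatrix_top_restrict_apply (s : Finset V) (x y : V) :
    ((⊤ : SimpleGraph V).restrict s).lapMatrix R x y =
      if y ∈ s then (if x = y then (#s : R) else 0) - (if x ∈ s then 1 else 0) else 0 := by
  have hnbr : ((⊤ : SimpleGraph V).restrict s).neighborFinset y =
      if y ∈ s then s.erase y else ∅ := by
    ext z
    by_cases hy : y ∈ s <;> simp [hy, eq_comm]
  by_cases hy : y ∈ s <;> by_cases hxy : x = y
  · subst hxy
    simp [lapMatrix, degMatrix, ← card_neighborFinset_eq_degree, hnbr, hy,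
      Nat.cast_sub (one_le_card.mpr ⟨x, hy⟩)]
  · by_cases hx : x ∈ s <;> simp [lapMatrix, degMatrix, adjMatrix_apply, hx, hy, hxy]
  · subst hxy
    simp [lapMatrix, degMatrix, ← card_neighborFinset_eq_degree, hnbr, hy]
  · simp [lapMatrix, degMatrix, adjMatrix_apply, hy, hxy]

theorem lapMatrix_mul_lapMatrix_top_restrict {H : SimpleGraph V} [DecidableRel H.Adj]
    {s : Finset V} (hH : ∀ ⦃x y⦄, H.Adj x y → y ∈ s) :
    H.lapMatrix R * ((⊤ : SimpleGraph V).restrict s).lapMatrix R = #s • H.lapMatrix R := by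
  ext x y
  have hrow : ∑ z ∈ s, H.lapMatrix R x z = 0 := by
    rw [Finset.sum_subset (subset_univ s) fun z _ hz => lapMatrix_apply_eq_zero_of_notMem hH x hz]
    simpa [mulVec, dotProduct] using congrFun (H.lapMatrix_mulVec_const_eq_zero (R := R)) x
  by_cases hy : y ∈ s
  · simp only [mul_apply, lapMatrix_top_restrict_apply, if_pos hy, mul_sub, mul_ite, mul_zero,
      mul_one, Finset.sum_sub_distrib, Finset.sum_ite_eq', Finset.mem_univ, if_true,
      Finset.sum_ite_mem, Finset.univ_inter, hrow, sub_zero, Matrix.smul_apply, nsmul_eq_mul]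
    ring
  · simp [mul_apply, lapMatrix_top_restrict_apply, hy, lapMatrix_apply_eq_zero_of_notMem hH x hy]

theorem lapMatrix_top_restrict_mul_lapMatrix {H : SimpleGraph V} [DecidableRel H.Adj]
    {s : Finset V} (hH : ∀ ⦃x y⦄, H.Adj x y → y ∈ s) :
    ((⊤ : SimpleGraph V).restrict s).lapMatrix R * H.lapMatrix R = #s • H.lapMatrix R := by
  simpa only [transpose_mul, transpose_smul, (isSymm_lapMatrix R _).eq] using
    congrArg transpose (lapMatrix_mul_lapMatrix_top_restrict (R := R) hH)

theorem lapMatrix_restrict_add_lapMatrix_compl_restrict (G : SimpleGraph V) [DecidableRel G.Adj]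
    (s : Finset V) :
    (G.restrict s).lapMatrix R + (Gᶜ.restrict s).lapMatrix R =
      ((⊤ : SimpleGraph V).restrict s).lapMatrix R := by
  ext x y
  by_cases hxy : x = y
  · subst hxy
    simp only [lapMatrix, degMatrix, Matrix.add_apply, Matrix.sub_apply, diagonal_apply_eq,
      adjMatrix_apply, degree_eq_sum_if_adj, SimpleGraph.irrefl, if_false, sub_zero,
      ← sum_add_distrib]
    refine sum_congr rfl fun z _ => ?_
    by_cases hz : x = z <;> by_cases hadj : G.Adj x z <;> simp [hz, hadj]
  · by_cases hadj : G.Adj x y <;> simp [lapMatrix, degMatrix, adjMatrix_apply, hxy, hadj]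

theorem annihilatedByIntegerRoots_lapMatrix_compl_restrict {G : SimpleGraph V}
    [DecidableRel G.Adj] {s : Finset V}
    (hG : AnnihilatedByIntegerRoots ((G.restrict s).lapMatrix R)) :
    AnnihilatedByIntegerRoots ((Gᶜ.restrict s).lapMatrix R) := by
  have hsupp : ∀ (H : SimpleGraph V), ∀ ⦃x y⦄, (H.restrict s).Adj x y → y ∈ s :=
    fun _ _ _ h => h.2.2
  rw [← add_sub_cancel_left ((G.restrict s).lapMatrix R) ((Gᶜ.restrict s).lapMatrix R),
    lapMatrix_restrict_add_lapMatrix_compl_restrict]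
  exact hG.sub (lapMatrix_mul_lapMatrix_top_restrict (hsupp G))
    (lapMatrix_top_restrict_mul_lapMatrix (hsupp G))
    (lapMatrix_mul_lapMatrix_top_restrict (hsupp ⊤))

theorem IsThreshold.annihilatedByIntegerRoots_lapMatrix {G : SimpleGraph V} [DecidableRel G.Adj]
    (hG : G.IsThreshold) : AnnihilatedByIntegerRoots (G.lapMatrix R) := by
  suffices h : ∀ s : Finset V, AnnihilatedByIntegerRoots ((G.restrict s).lapMatrix R) ∧
      AnnihilatedByIntegerRoots ((Gᶜ.restrict s).lapMatrix R) by
    rw [← lapMatrix_eq_of_eq (restrict_univ G)]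
    exact (h univ).1
  intro s
  induction s using Finset.strongInduction with
  | H s ih =>
    rcases s.eq_empty_or_nonempty with rfl | hs
    · rw [lapMatrix_restrict_empty, lapMatrix_restrict_empty]
      exact ⟨annihilatedByIntegerRoots_zero, annihilatedByIntegerRoots_zero⟩
    obtain ⟨u, hu, hiso | hdom⟩ := hG s hs
    · have hG' : AnnihilatedByIntegerRoots ((G.restrict s).lapMatrix R) := by
        rw [← lapMatrix_eq_of_eq (restrict_erase_of_forall_not_adj hiso)]
        exact (ih _ (erase_ssubset hu)).1
      exact ⟨hG', annihilatedByIntegerRoots_lapMatrix_compl_restrict hG'⟩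
    · have hiso : ∀ v ∈ s, ¬Gᶜ.Adj u v := fun v hv ⟨huv, hadj⟩ => hadj (hdom v hv huv.symm)
      have hGc : AnnihilatedByIntegerRoots ((Gᶜ.restrict s).lapMatrix R) := by
        rw [← lapMatrix_eq_of_eq (restrict_erase_of_forall_not_adj hiso)]
        exact (ih _ (erase_ssubset hu)).2
      refine ⟨?_, hGc⟩
      rw [lapMatrix_eq_of_eq (congrArg (restrict · s) (compl_compl G)).symm]
      exact annihilatedByIntegerRoots_lapMatrix_compl_restrict hGc

theorem IsThreshold.exists_intCast_eq_of_mem_spectrum {G : SimpleGraph V} [DecidableRel G.Adj]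
    (hG : G.IsThreshold) :
    ∀ z ∈ spectrum ℂ ((G.lapMatrix ℝ).map Complex.ofReal), ∃ a : ℤ, z = a := by
  intro z hz
  rw [show (G.lapMatrix ℝ).map Complex.ofReal = G.lapMatrix ℂ from
    lapMatrix_map G Complex.ofRealHom] at hz
  exact hG.annihilatedByIntegerRoots_lapMatrix.exists_eq_intCast hz

end SimpleGraph

theorem ZMod.mul_eq_zero_iff_le_padicValNat_add {p t : ℕ} [Fact p.Prime] {x y : ZMod (p ^ t)}
    (hx : x ≠ 0) (hy : y ≠ 0) :
    x * y = 0 ↔ t ≤ padicValNat p x.val + padicValNat p y.val := by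
  have hx' : x.val ≠ 0 := (ZMod.val_ne_zero x).mpr hx
  have hy' : y.val ≠ 0 := (ZMod.val_ne_zero y).mpr hy
  rw [show x * y = ((x.val * y.val : ℕ) : ZMod (p ^ t)) by simp, ZMod.natCast_eq_zero_iff,
    padicValNat_dvd_iff_le (mul_ne_zero hx' hy'), padicValNat.mul hx' hy']

theorem isThreshold_zdGraph_prime_pow {p : ℕ} (t : ℕ) (hp : p.Prime) :
    (zdGraph (p ^ t)).IsThreshold := by
  have : Fact p.Prime := ⟨hp⟩
  exact SimpleGraph.isThreshold_of_adj_iff (fun v => padicValNat p (v : ZMod (p ^ t)).val) t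
    fun x y => and_congr_right fun _ => ZMod.mul_eq_zero_iff_le_padicValNat_add x.2.1 y.2.1

theorem zdGraph_prime_power_laplacian_integral_general (n p t : ℕ) [NeZero n] (hp : p.Prime)
    (hn : n = p ^ t) :
    ∀ z ∈ spectrum ℂ (((zdGraph n).lapMatrix ℝ).map Complex.ofReal), ∃ a : ℤ, z = a := by
  subst hn
  exact (isThreshold_zdGraph_prime_pow t hp).exists_intCast_eq_of_mem_spectrum

/-- For a prime `p` and `t ≥ 2`, the zero divisor graph `Γ(ZMod (p^t))` is Laplacian
integral: every eigenvalue of its Laplacian matrix is an integer. -/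
theorem zdGraph_prime_power_laplacian_integral (n p t : ℕ) [NeZero n] (hp : p.Prime)
    (ht : 2 ≤ t) (hn : n = p ^ t) :
    ∀ z ∈ spectrum ℂ (((zdGraph n).lapMatrix ℝ).map Complex.ofReal), ∃ a : ℤ, z = a :=
  zdGraph_prime_power_laplacian_integral_general n p t hp hn
end

section
/- Let n = p^t for a prime p and an integer t ≥ 2 with n ≠ 4. Then the Laplacian spectral radius of Γ(Z_{p^t}) equals the number of vertices of Γ(Z_{p^t}), namely λ(Γ(Z_{p^t})) = p^{t−1} − 1. -/
open scoped BigOperators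

/-- The multiset of Laplacian eigenvalues (roots of the characteristic polynomial of the
Laplacian matrix, counted with multiplicity) of a finite graph. -/
noncomputable def lapEigs {V : Type*} [Fintype V] [DecidableEq V] (G : SimpleGraph V)
    [DecidableRel G.Adj] : Multiset ℝ :=
  (G.lapMatrix ℝ).charpoly.roots

/-- The algebraic connectivity `μ(G)`: the second smallest Laplacian eigenvalue. -/
noncomputable def algConn {V : Type*} [Fintype V] [DecidableEq V] (G : SimpleGraph V)
    [DecidableRel G.Adj] : ℝ :=
  ((lapEigs G).sort (· ≤ ·)).getD 1 (Fintype.card V)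

/-- The Laplacian spectral radius `λ(G)`: the largest Laplacian eigenvalue. -/
noncomputable def lapRadius {V : Type*} [Fintype V] [DecidableEq V] (G : SimpleGraph V)
    [DecidableRel G.Adj] : ℝ :=
  ((lapEigs G).sort (· ≤ ·)).getD (Fintype.card V - 1) 0

/-!
On `N` vertices the Laplacian quadratic form `∑_{i ~ j} (x i - x j)²` is at most the same sum
over all pairs, which equals `N ‖x‖² - (∑ x)²`; so every Laplacian eigenvalue is at most `N`.
If `v₀` is adjacent to all other vertices and `N ≥ 2`, then `N • e_{v₀} - 1` is an eigenvector
with eigenvalue `N`. In `ZMod (p ^ t)` the zero divisors are the non-units, i.e. the multiples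
of `p`; the `p ^ (t - 1) - 1` nonzero ones are all annihilated by `p ^ (t - 1)`, which is
therefore a universal vertex.
-/

open Matrix Finset

theorem Multiset.getD_sort_card_sub_one_eq {α : Type*} [LinearOrder α] {s : Multiset α} {a : α}
    (d : α) (ha : a ∈ s) (hmax : ∀ b ∈ s, b ≤ a) :
    (s.sort (· ≤ ·)).getD (card s - 1) d = a := by
  have hmem : a ∈ s.sort (· ≤ ·) := (mem_sort _).2 ha
  have hpos := List.length_pos_of_mem hmem
  rw [← length_sort (· ≤ ·), List.getD_eq_getElem _ _ (by omega),
    ← List.getLast_eq_getElem (List.ne_nil_of_mem hmem)]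
  exact le_antisymm (hmax _ ((mem_sort _).1 (List.getLast_mem _)))
    ((pairwise_sort _ _).rel_getLast hmem)

theorem Matrix.mem_roots_charpoly_iff {n K : Type*} [Fintype n] [DecidableEq n] [Field K]
    (A : Matrix n n K) (μ : K) :
    μ ∈ A.charpoly.roots ↔ ∃ v ≠ 0, A *ᵥ v = μ • v := by
  rw [Polynomial.mem_roots A.charpoly_monic.ne_zero, Polynomial.IsRoot, eval_charpoly,
    ← exists_mulVec_eq_zero_iff]
  simp only [sub_mulVec, scalar_apply, ← smul_one_eq_diagonal, smul_mulVec, one_mulVec,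
    sub_eq_zero, eq_comm]

theorem Finset.sum_sum_sub_sq {V : Type*} [Fintype V] (x : V → ℝ) :
    ∑ i, ∑ j, (x i - x j) ^ 2 = 2 * (Fintype.card V * (x ⬝ᵥ x) - (∑ i, x i) ^ 2) := by
  simp only [sub_sq, sum_add_distrib, sum_sub_distrib, sum_const, card_univ, nsmul_eq_mul,
    ← mul_sum, ← sum_mul, dotProduct, ← sq]
  ring

namespace SimpleGraph
variable {V : Type*} [Fintype V] [DecidableEq V] (G : SimpleGraph V) [DecidableRel G.Adj]

theorem dotProduct_lapMatrix_mulVec_le (x : V → ℝ) :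
    x ⬝ᵥ (G.lapMatrix ℝ *ᵥ x) ≤ Fintype.card V * (x ⬝ᵥ x) := by
  have hform := G.lapMatrix_toLinearMap₂' ℝ x
  rw [toLinearMap₂'_apply'] at hform
  calc x ⬝ᵥ (G.lapMatrix ℝ *ᵥ x)
      = (∑ i, ∑ j, if G.Adj i j then (x i - x j) ^ 2 else 0) / 2 := by simpa using hform
    _ ≤ (∑ i, ∑ j, (x i - x j) ^ 2) / 2 := by
        gcongr with i _ j _
        split_ifs
        exacts [le_rfl, sq_nonneg _]
    _ ≤ Fintype.card V * (x ⬝ᵥ x) := by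
        rw [sum_sum_sub_sq]; nlinarith [sq_nonneg (∑ i, x i)]

theorem le_card_of_mem_lapEigs {μ : ℝ} (hμ : μ ∈ lapEigs G) : μ ≤ Fintype.card V := by
  obtain ⟨v, hv, hμv⟩ := (mem_roots_charpoly_iff _ μ).1 hμ
  have hpos : 0 < v ⬝ᵥ v :=
    lt_of_le_of_ne (Fintype.sum_nonneg fun i => mul_self_nonneg (v i))
      (Ne.symm (dotProduct_self_eq_zero.not.2 hv))
  have := G.dotProduct_lapMatrix_mulVec_le v
  rw [hμv, dotProduct_smul, smul_eq_mul] at this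
  exact le_of_mul_le_mul_right this hpos

theorem lapMatrix_mulVec_single_of_isUniversal {R : Type*} [Ring R] {v₀ : V}
    (h : G.IsUniversal v₀) :
    G.lapMatrix R *ᵥ Pi.single v₀ 1 = Pi.single v₀ (Fintype.card V : R) - 1 := by
  have hdeg : (G.degree v₀ : R) = Fintype.card V - 1 := by
    rw [(G.degree_eq_card_sub_one v₀).2 h, Nat.cast_pred (Fintype.card_pos_iff.2 ⟨v₀⟩)]
  ext w
  rw [mulVec_single_one]
  obtain rfl | hw := eq_or_ne w v₀
  · simp [lapMatrix, degMatrix, hdeg]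
  · simp [lapMatrix, degMatrix, hw, (h hw.symm).symm]

theorem card_mem_lapEigs_of_isUniversal {v₀ : V} (h : G.IsUniversal v₀)
    (hV : 2 ≤ Fintype.card V) : (Fintype.card V : ℝ) ∈ lapEigs G := by
  have hsingle : Pi.single v₀ (Fintype.card V : ℝ) = (Fintype.card V : ℝ) • Pi.single v₀ 1 := by
    ext w; simp [Pi.single_apply]
  have hone : G.lapMatrix ℝ *ᵥ 1 = 0 := G.lapMatrix_mulVec_const_eq_zero
  refine (mem_roots_charpoly_iff _ _).2
    ⟨Pi.single v₀ (Fintype.card V : ℝ) - 1, fun h0 => ?_, ?_⟩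
  · have := congrFun h0 v₀
    simp only [Pi.sub_apply, Pi.single_eq_same, Pi.one_apply, Pi.zero_apply, sub_eq_zero] at this
    have : (2 : ℝ) ≤ Fintype.card V := by exact_mod_cast hV
    linarith
  · rw [mulVec_sub, hone, sub_zero, hsingle, mulVec_smul,
      lapMatrix_mulVec_single_of_isUniversal G h, ← hsingle]

theorem lapRadius_eq_card_of_isUniversal {v₀ : V} (h : G.IsUniversal v₀)
    (hV : 2 ≤ Fintype.card V) : lapRadius G = Fintype.card V := by
  have hcard : Multiset.card (lapEigs G) = Fintype.card V := by
    rw [lapEigs, (posSemidef_lapMatrix ℝ G).1.roots_charpoly_eq_eigenvalues]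
    simp
  have := Multiset.getD_sort_card_sub_one_eq 0 (G.card_mem_lapEigs_of_isUniversal h hV)
    fun _ => G.le_card_of_mem_lapEigs
  rwa [hcard] at this

end SimpleGraph

theorem exists_ne_zero_mul_eq_zero_iff_not_isUnit {R : Type*} [CommRing R] [Finite R] (x : R) :
    (∃ y, y ≠ 0 ∧ x * y = 0) ↔ ¬IsUnit x := by
  simp [isUnit_iff_mem_nonZeroDivisors_of_finite, notMem_nonZeroDivisors_iff_left,
    Set.nonempty_def, and_comm]

theorem Nat.pow_succ_sub_one_div {p : ℕ} (hp : 0 < p) (k : ℕ) :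
    (p ^ (k + 1) - 1) / p = p ^ k - 1 := by
  have hk : 0 < p ^ k := pow_pos hp k
  apply Nat.div_eq_of_lt_le
  · rw [Nat.sub_mul, one_mul, pow_succ]
    exact Nat.sub_le_sub_left hp _
  · rw [Nat.sub_add_cancel hk, pow_succ]
    exact Nat.sub_lt (by positivity) one_pos

theorem Nat.Prime.three_le_pow_of_pow_succ_ne_four {p k : ℕ} (hp : p.Prime) (hk : k ≠ 0)
    (h4 : p ^ (k + 1) ≠ 4) : 3 ≤ p ^ k := by
  rcases hp.eq_two_or_odd' with rfl | hodd
  · have hk2 : 2 ≤ k := by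
      by_contra! hk1
      obtain rfl : k = 1 := by omega
      exact h4 rfl
    calc 3 ≤ 2 ^ 2 := by norm_num
      _ ≤ 2 ^ k := Nat.pow_le_pow_right two_pos hk2
  · have hp3 : 3 ≤ p := by
      have := hp.two_le
      rcases hodd with ⟨m, rfl⟩
      omega
    calc 3 ≤ p ^ 1 := by rwa [pow_one]
      _ ≤ p ^ k := Nat.pow_le_pow_right hp.pos (Nat.one_le_iff_ne_zero.2 hk)

namespace ZMod

theorem card_filter_val {n : ℕ} [NeZero n] (P : ℕ → Prop) [DecidablePred P] :
    #{x : ZMod n | P x.val} = #{m ∈ range n | P m} := by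
  refine Finset.card_nbij' (·.val) (fun m => (m : ZMod n)) ?_ ?_ ?_ ?_
  · intro x hx; simpa [ZMod.val_lt] using hx
  · intro m hm
    simp only [Finset.coe_filter, Finset.mem_range, Set.mem_ofPred_eq] at hm
    simpa [ZMod.val_cast_of_lt hm.1] using hm.2
  · intro x _; simp
  · intro m hm
    simp only [Finset.coe_filter, Finset.mem_range, Set.mem_ofPred_eq] at hm
    exact ZMod.val_cast_of_lt hm.1

variable {p k : ℕ} [NeZero (p ^ (k + 1))]

theorem isUnit_prime_pow_iff (hp : p.Prime) (x : ZMod (p ^ (k + 1))) :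
    IsUnit x ↔ ¬p ∣ x.val := by
  conv_lhs => rw [← natCast_zmod_val x]
  rw [isUnit_iff_coprime, Nat.coprime_pow_right_iff k.succ_pos, Nat.coprime_comm,
    hp.coprime_iff_not_dvd]

theorem exists_ne_zero_mul_eq_zero_iff (hp : p.Prime) (x : ZMod (p ^ (k + 1))) :
    (∃ y, y ≠ 0 ∧ x * y = 0) ↔ p ∣ x.val := by
  rw [exists_ne_zero_mul_eq_zero_iff_not_isUnit, isUnit_prime_pow_iff hp, not_not]

theorem mul_prime_pow_eq_zero_iff (hp : p.Prime) (x : ZMod (p ^ (k + 1))) :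
    x * ((p ^ k : ℕ) : ZMod (p ^ (k + 1))) = 0 ↔ p ∣ x.val := by
  conv_lhs => rw [← natCast_zmod_val x]
  rw [← Nat.cast_mul, natCast_eq_zero_iff]
  have := Nat.mul_dvd_mul_iff_right (a := p) (b := x.val) (pow_pos hp.pos k)
  rwa [← pow_succ'] at this

end ZMod

section PrimePower

variable {p k : ℕ} [NeZero (p ^ (k + 1))]

theorem card_zdVert_prime_pow (hp : p.Prime) :
    Fintype.card (ZdVert (p ^ (k + 1))) = p ^ k - 1 := by
  calc Fintype.card (ZdVert (p ^ (k + 1)))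
      = #{x : ZMod (p ^ (k + 1)) | x.val ≠ 0 ∧ p ∣ x.val} := by
        rw [Fintype.card_subtype]
        simp only [ZMod.exists_ne_zero_mul_eq_zero_iff hp, ne_eq, ZMod.val_eq_zero]
    _ = #{m ∈ range (p ^ (k + 1) - 1).succ | m ≠ 0 ∧ p ∣ m} := by
        rw [ZMod.card_filter_val (fun m => m ≠ 0 ∧ p ∣ m), Nat.succ_eq_add_one,
          Nat.sub_add_cancel NeZero.one_le]
    _ = p ^ k - 1 := by rw [Nat.card_multiples', Nat.pow_succ_sub_one_div hp.pos]

theorem exists_isUniversal_zdGraph_prime_pow (hp : p.Prime) (hk : k ≠ 0) :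
    ∃ v, (zdGraph (p ^ (k + 1))).IsUniversal v := by
  have hlt : p ^ k < p ^ (k + 1) := Nat.pow_lt_pow_right hp.one_lt k.lt_succ_self
  have hne : ((p ^ k : ℕ) : ZMod (p ^ (k + 1))) ≠ 0 := by
    rw [ne_eq, ZMod.natCast_eq_zero_iff, Nat.pow_dvd_pow_iff_le_right hp.one_lt]
    omega
  have hdvd : p ∣ ((p ^ k : ℕ) : ZMod (p ^ (k + 1))).val := by
    rw [ZMod.val_cast_of_lt hlt]
    exact dvd_pow_self p hk
  refine ⟨⟨_, hne, (ZMod.exists_ne_zero_mul_eq_zero_iff hp _).2 hdvd⟩, fun w hw => ⟨hw, ?_⟩⟩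
  rw [mul_comm]
  exact (ZMod.mul_prime_pow_eq_zero_iff hp _).2
    ((ZMod.exists_ne_zero_mul_eq_zero_iff hp _).1 w.2.2)

end PrimePower

/-- For `n = p^t` with `p` prime, `t ≥ 2` and `n ≠ 4`, the Laplacian spectral radius of
`Γ(ZMod (p^t))` equals its number of vertices, namely `p^(t-1) - 1`. -/
theorem lapRadius_prime_power (n p t : ℕ) [NeZero n] (hp : p.Prime) (ht : 2 ≤ t)
    (hn : n = p ^ t) (h4 : n ≠ 4) :
    lapRadius (zdGraph n) = (Fintype.card (ZdVert n) : ℝ) ∧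
    lapRadius (zdGraph n) = (p : ℝ) ^ (t - 1) - 1 := by
  obtain ⟨k, rfl⟩ : ∃ k, t = k + 1 := ⟨t - 1, by omega⟩
  subst hn
  have hk : k ≠ 0 := by omega
  obtain ⟨v, hv⟩ := exists_isUniversal_zdGraph_prime_pow hp hk
  have hcard : Fintype.card (ZdVert (p ^ (k + 1))) = p ^ k - 1 := card_zdVert_prime_pow hp
  have h3 : 3 ≤ p ^ k := hp.three_le_pow_of_pow_succ_ne_four hk h4
  have hrad := (zdGraph _).lapRadius_eq_card_of_isUniversal hv (by omega)
  refine ⟨hrad, ?_⟩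
  rw [hrad, hcard, Nat.add_sub_cancel, Nat.cast_sub (by omega), Nat.cast_pow, Nat.cast_one]
end
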